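/- Let C be a cartesian closed category and ⊥ a dualizing object of C, i.e. for every object A the canonical morphism A ⟶ ((A ⇨ ⊥) ⇨ ⊥) is an isomorphism. Then ⊥ is an initial object of C. -/

import Mathlib

/-!
Evaluating the dualizing condition at the unit gives `⊥ ⇨ ⊥ ≅ (𝟙 ⇨ ⊥) ⇨ ⊥ ≅ 𝟙`, so `⊥ ⇨ ⊥` is
terminal. Hence for every `A`, by the dualizing isomorphism and transposition,
`(⊥ ⟶ A) ≃ (⊥ ⟶ (A ⇨ ⊥) ⇨ ⊥) ≃ (A ⇨ ⊥ ⟶ ⊥ ⇨ ⊥)`, and the last hom-set is a singleton.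
-/

open CategoryTheory CategoryTheory.Limits MonoidalCategory

open scoped CategoryTheory.CartesianClosed

universe v u

noncomputable section

namespace CategoryTheory.MonoidalClosed

section

variable {C : Type u} [Category.{v} C] [MonoidalCategory C] [BraidedCategory C] [MonoidalClosed C]

def toDoubleDual (D A : C) : A ⟶ (A ⟹ D) ⟹ D :=
  curry ((β_ (A ⟹ D) A).hom ≫ (ihom.ev A).app D)

def homIhomSwap (X Y Z : C) : (X ⟶ Y ⟹ Z) ≃ (Y ⟶ X ⟹ Z) :=
  ((ihom.adjunction Y).homEquiv X Z).symm.trans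
    (((β_ Y X).homCongr (Iso.refl Z)).trans ((ihom.adjunction X).homEquiv Y Z))

def ihomSelfIsoTensorUnit (D : C) [IsIso (toDoubleDual D (𝟙_ C))] : (D ⟹ D) ≅ 𝟙_ C :=
  (internalHom.mapIso (unitIsoSelf (X := D)).op).app D ≪≫ (asIso (toDoubleDual D (𝟙_ C))).symm

end

section

variable {C : Type u} [Category.{v} C] [CartesianMonoidalCategory C] [BraidedCategory C]
  [MonoidalClosed C]

def isInitialOfIsIsoToDoubleDual (D : C) [∀ A : C, IsIso (toDoubleDual D A)] : IsInitial D :=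
  have hT : IsTerminal (D ⟹ D) :=
    CartesianMonoidalCategory.isTerminalTensorUnit.ofIso (ihomSelfIsoTensorUnit D).symm
  have (A : C) : Unique (D ⟶ A) :=
    letI : Unique ((A ⟹ D) ⟶ D ⟹ D) := ⟨⟨hT.from _⟩, fun _ => hT.hom_ext _ _⟩
    ((asIso (toDoubleDual D A)).homToEquiv.trans (homIhomSwap D (A ⟹ D) D)).unique
  IsInitial.ofUnique D

end

end CategoryTheory.MonoidalClosed

end

/-- In a cartesian closed category, a dualizing object `bot` (i.e. the canonical
morphism `A ⟶ ((A ⇨ bot) ⇨ bot)` is an isomorphism for every `A`) is an initial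
object. -/
theorem dualizing_isInitial (C : Type u) [Category.{v} C] [CartesianMonoidalCategory C]
    [MonoidalClosed C] (bot : C)
    (dualizing : ∀ A : C,
      letI := BraidedCategory.ofCartesianMonoidalCategory (C := C)
      IsIso (MonoidalClosed.curry ((β_ (A ⟹ bot) A).hom ≫ (ihom.ev A).app bot))) :
    Nonempty (IsInitial bot) :=
  letI := BraidedCategory.ofCartesianMonoidalCategory (C := C)
  haveI : ∀ A : C, IsIso (MonoidalClosed.toDoubleDual bot A) := dualizing
  ⟨MonoidalClosed.isInitialOfIsIsoToDoubleDual bot⟩
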